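/- Let u be a C² convex solution of the translating soliton equation on an open set Ω ⊆ ℝ². Then at every point of Ω: (i) u_{x₁x₁} ≤ 1 + u_{x₁}² and u_{x₂x₂} ≤ 1 + u_{x₂}²; (ii) |u_{x₁x₂}| ≤ √(1 + u_{x₁}²)·√(1 + u_{x₂}²). Consequently |∂/∂x_i (arctan u_{x_i})| ≤ 1 for i = 1, 2, and |∂/∂x₂ √(1 + u_{x₁}²)| ≤ |u_{x₁}|·√(1 + u_{x₂}²). -/

import Mathlib

open Real Filter

noncomputable def pd1 (f : ℝ × ℝ → ℝ) (p : ℝ × ℝ) : ℝ := fderiv ℝ f p (1, 0)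

noncomputable def pd2 (f : ℝ × ℝ → ℝ) (p : ℝ × ℝ) : ℝ := fderiv ℝ f p (0, 1)

/-- The translating soliton equation in nondivergence form. -/
def IsSolitonAt (u : ℝ × ℝ → ℝ) (p : ℝ × ℝ) : Prop :=
  (1 + (pd2 u p) ^ 2) * pd1 (pd1 u) p
    - 2 * pd1 u p * pd2 u p * pd2 (pd1 u) p
    + (1 + (pd1 u p) ^ 2) * pd2 (pd2 u) p
  = 1 + (pd1 u p) ^ 2 + (pd2 u p) ^ 2

/-- Positive semidefiniteness of the Hessian of `u` at `p` (convexity of `u` at `p`). -/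
def HessPosSemidef (u : ℝ × ℝ → ℝ) (p : ℝ × ℝ) : Prop :=
  ∀ v : ℝ × ℝ,
    0 ≤ pd1 (pd1 u) p * v.1 ^ 2 + 2 * pd2 (pd1 u) p * v.1 * v.2 + pd2 (pd2 u) p * v.2 ^ 2

/-- Key algebraic inequality: completing the square against the soliton equation. -/
lemma soliton_keyA (u1 u2 a b c : ℝ) (ha : 0 ≤ a) (hb : 0 ≤ b) (hc : c^2 ≤ a*b)
    (heq : (1+u2^2)*a - 2*u1*u2*c + (1+u1^2)*b = 1+u1^2+u2^2) :
    a ≤ 1+u1^2 := by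
  have hX : (0:ℝ) ≤ (1+u1^2)^2*b + (u1*u2)^2*a := by positivity
  have h1 : (2*(1+u1^2)*(u1*u2)*c)^2 ≤ ((1+u1^2)^2*b + (u1*u2)^2*a)^2 := by
    nlinarith [sq_nonneg ((1+u1^2)^2*b - (u1*u2)^2*a),
      mul_nonneg (mul_nonneg (sq_nonneg (1+u1^2)) (sq_nonneg (u1*u2))) (sub_nonneg.2 hc)]
  have h2 : 2*(1+u1^2)*(u1*u2)*c ≤ (1+u1^2)^2*b + (u1*u2)^2*a := by nlinarith [h1, hX]
  have heq' : (1+u1^2)*((1+u2^2)*a - 2*u1*u2*c + (1+u1^2)*b) = (1+u1^2)*(1+u1^2+u2^2) := by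
    rw [heq]
  have h3 : a*(1+u1^2+u2^2) ≤ (1+u1^2)*(1+u1^2+u2^2) := by nlinarith [h2, heq']
  have h4 : (0:ℝ) < 1+u1^2+u2^2 := by positivity
  exact le_of_mul_le_mul_right h3 h4

lemma pd_differentiableAt (Ω : Set (ℝ × ℝ)) (hΩ : IsOpen Ω) (u : ℝ × ℝ → ℝ)
    (hu : ContDiffOn ℝ 2 u Ω) (p : ℝ × ℝ) (hp : p ∈ Ω) (w : ℝ × ℝ) :
    DifferentiableAt ℝ (fun q => fderiv ℝ u q w) p := by
  have h1 : ContDiffOn ℝ 1 (fun x => fderiv ℝ u x) Ω := hu.fderiv_of_isOpen hΩ le_rfl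
  have h2 : DifferentiableAt ℝ (fun x => fderiv ℝ u x) p :=
    ((h1.contDiffAt (hΩ.mem_nhds hp)).differentiableAt one_ne_zero)
  exact (ContinuousLinearMap.apply ℝ ℝ w).differentiableAt.comp p h2

lemma pd1_arctan (g : ℝ × ℝ → ℝ) (p : ℝ × ℝ) (hg : DifferentiableAt ℝ g p) :
    pd1 (fun q => Real.arctan (g q)) p = (1/(1+(g p)^2)) * pd1 g p := by
  have h : HasFDerivAt (fun q => Real.arctan (g q)) ((1/(1+(g p)^2)) • fderiv ℝ g p) p :=
    (Real.hasDerivAt_arctan (g p)).comp_hasFDerivAt p hg.hasFDerivAt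
  rw [pd1, h.fderiv]
  simp [pd1]

lemma pd2_arctan (g : ℝ × ℝ → ℝ) (p : ℝ × ℝ) (hg : DifferentiableAt ℝ g p) :
    pd2 (fun q => Real.arctan (g q)) p = (1/(1+(g p)^2)) * pd2 g p := by
  have h : HasFDerivAt (fun q => Real.arctan (g q)) ((1/(1+(g p)^2)) • fderiv ℝ g p) p :=
    (Real.hasDerivAt_arctan (g p)).comp_hasFDerivAt p hg.hasFDerivAt
  rw [pd2, h.fderiv]
  simp [pd2]

lemma pd2_sqrt (g : ℝ × ℝ → ℝ) (p : ℝ × ℝ) (hg : DifferentiableAt ℝ g p) :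
    pd2 (fun q => Real.sqrt (1 + (g q)^2)) p = (g p / Real.sqrt (1+(g p)^2)) * pd2 g p := by
  have hne : (1 : ℝ) + (g p)^2 ≠ 0 := by positivity
  have hd : HasDerivAt (fun t : ℝ => Real.sqrt (1 + t^2)) (g p / Real.sqrt (1+(g p)^2)) (g p) := by
    have h1 : HasDerivAt (fun t : ℝ => 1 + t^2) (2 * g p) (g p) := by
      simpa using ((hasDerivAt_pow 2 (g p)).const_add 1)
    have := (Real.hasDerivAt_sqrt hne).comp (g p) h1
    rw [show g p / Real.sqrt (1+(g p)^2) = 1 / (2 * Real.sqrt (1+(g p)^2)) * (2 * g p) by ring]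
    exact this
  have h : HasFDerivAt (fun q => Real.sqrt (1 + (g q)^2))
      ((g p / Real.sqrt (1+(g p)^2)) • fderiv ℝ g p) p :=
    hd.comp_hasFDerivAt p hg.hasFDerivAt
  rw [pd2, h.fderiv]
  simp [pd2]

/-- Pointwise second derivative bounds for `C²` convex graphical translating
solitons: `u₁₁ ≤ 1 + u₁²`, `u₂₂ ≤ 1 + u₂²`, `|u₁₂| ≤ √(1+u₁²)·√(1+u₂²)`; consequently
`|∂ᵢ arctan u_{xᵢ}| ≤ 1` for `i = 1,2` and `|∂₂ √(1+u₁²)| ≤ |u₁|·√(1+u₂²)`. -/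
theorem soliton_second_derivative_bounds (Ω : Set (ℝ × ℝ)) (hΩ : IsOpen Ω)
    (u : ℝ × ℝ → ℝ) (hu : ContDiffOn ℝ 2 u Ω)
    (hconv : ∀ p ∈ Ω, HessPosSemidef u p)
    (hsol : ∀ p ∈ Ω, IsSolitonAt u p) :
    ∀ p ∈ Ω,
      pd1 (pd1 u) p ≤ 1 + (pd1 u p) ^ 2 ∧
      pd2 (pd2 u) p ≤ 1 + (pd2 u p) ^ 2 ∧
      |pd2 (pd1 u) p| ≤ Real.sqrt (1 + (pd1 u p) ^ 2) * Real.sqrt (1 + (pd2 u p) ^ 2) ∧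
      |pd1 (fun q => Real.arctan (pd1 u q)) p| ≤ 1 ∧
      |pd2 (fun q => Real.arctan (pd2 u q)) p| ≤ 1 ∧
      |pd2 (fun q => Real.sqrt (1 + (pd1 u q) ^ 2)) p|
        ≤ |pd1 u p| * Real.sqrt (1 + (pd2 u p) ^ 2) := by
  intro p hp
  set U1 := pd1 u p with hU1
  set U2 := pd2 u p with hU2
  set a := pd1 (pd1 u) p with hA
  set c := pd2 (pd1 u) p with hC
  set b := pd2 (pd2 u) p with hB
  have ha : 0 ≤ a := by simpa using hconv p hp (1, 0)
  have hb : 0 ≤ b := by simpa using hconv p hp (0, 1)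
  have hc : c^2 ≤ a*b := by
    have hq : ∀ x : ℝ, 0 ≤ a*(x*x) + (2*c)*x + b := by
      intro x
      have := hconv p hp (x, 1)
      simp only at this
      nlinarith [this]
    have := discrim_le_zero (a := a) (b := 2*c) (c := b) hq
    rw [discrim] at this
    nlinarith [this]
  have heq : (1+U2^2)*a - 2*U1*U2*c + (1+U1^2)*b = 1+U1^2+U2^2 := hsol p hp
  have bound1 : a ≤ 1 + U1^2 := soliton_keyA U1 U2 a b c ha hb hc heq
  have bound2 : b ≤ 1 + U2^2 := by
    refine soliton_keyA U2 U1 b a c hb ha ?_ ?_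
    · rwa [mul_comm]
    · linear_combination heq
  have hc2 : c^2 ≤ (1+U1^2)*(1+U2^2) :=
    le_trans hc (mul_le_mul bound1 bound2 hb (by positivity))
  have bound3 : |c| ≤ Real.sqrt (1+U1^2) * Real.sqrt (1+U2^2) := by
    calc |c| = Real.sqrt (c^2) := (Real.sqrt_sq_eq_abs c).symm
      _ ≤ Real.sqrt ((1+U1^2)*(1+U2^2)) := Real.sqrt_le_sqrt hc2
      _ = Real.sqrt (1+U1^2) * Real.sqrt (1+U2^2) := Real.sqrt_mul (by positivity) _
  have hdg1 : DifferentiableAt ℝ (pd1 u) p := pd_differentiableAt Ω hΩ u hu p hp (1, 0)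
  have hdg2 : DifferentiableAt ℝ (pd2 u) p := pd_differentiableAt Ω hΩ u hu p hp (0, 1)
  have hpos1 : (0:ℝ) < 1 + U1^2 := by positivity
  have hpos2 : (0:ℝ) < 1 + U2^2 := by positivity
  refine ⟨bound1, bound2, bound3, ?_, ?_, ?_⟩
  · rw [pd1_arctan (pd1 u) p hdg1, ← hU1, ← hA,
      abs_of_nonneg (mul_nonneg (by positivity) ha)]
    rw [one_div, inv_mul_le_iff₀ hpos1]
    linarith
  · rw [pd2_arctan (pd2 u) p hdg2, ← hU2, ← hB,
      abs_of_nonneg (mul_nonneg (by positivity) hb)]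
    rw [one_div, inv_mul_le_iff₀ hpos2]
    linarith
  · rw [pd2_sqrt (pd1 u) p hdg1, ← hU1, ← hC, abs_mul, abs_div,
      abs_of_nonneg (Real.sqrt_nonneg (1+U1^2))]
    have hs1 : (0:ℝ) < Real.sqrt (1+U1^2) := Real.sqrt_pos.2 hpos1
    calc |U1| / Real.sqrt (1+U1^2) * |c|
        ≤ |U1| / Real.sqrt (1+U1^2) * (Real.sqrt (1+U1^2) * Real.sqrt (1+U2^2)) :=
          mul_le_mul_of_nonneg_left bound3 (by positivity)
      _ = |U1| * Real.sqrt (1+U2^2) := by field_simp
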